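/- Let G be a finitely generated torsion-free nilpotent group and g : ℕ → G a polynomial sequence. If there exists an element c ∈ G with g(n) = c for infinitely many n ∈ ℕ, then g is constant. Conversely, a constant sequence obviously repeats its value infinitely many times. -/

import Mathlib

/-!
Induct on the nilpotency class, after replacing `g` by `g · c⁻¹`. Modulo the centre `Z`, the
sequence is a polynomial sequence in `G ⧸ Z` that hits `1` infinitely often; `G ⧸ Z` is again
torsion-free (if `x ∈ ζₖ₊₁` and `xⁿ ∈ ζₖ` then `x ∈ ζₖ`, since `⁅xⁿ, y⁆ ≡ ⁅x, y⁆ⁿ` modulo `ζₖ`),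
so by induction `g` takes values in the abelian group `Z`. There the Gregory–Newton formula gives
`g n = ∑_{k ≤ d} (n choose k) • Δᵏ g 0` inside a finitely generated, hence free, abelian group, and
each coordinate is then a rational polynomial in `n` with infinitely many zeros.
-/

namespace PaperPoly

/-- `DegLE d f` means that `f : S → G` is a polynomial map of degree at most `d ∈ ℕ`:
the base case `DegLE 0 f` means `f` is constant, and `DegLE (d+1) f` means that for every
`s : S` both difference maps `L_s f : t ↦ f (s+t) * (f t)⁻¹` and
`R_s f : t ↦ (f t)⁻¹ * f (s+t)` satisfy `DegLE d`. -/
def DegLE {S : Type*} [AddCommSemigroup S] {G : Type*} [Group G] : ℕ → (S → G) → Prop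
  | 0 => fun f => ∀ t t' : S, f t = f t'
  | d + 1 => fun f => ∀ s : S,
      DegLE d (fun t => f (s + t) * (f t)⁻¹) ∧ DegLE d (fun t => (f t)⁻¹ * f (s + t))

/-- `f` is a polynomial map (of some finite degree). -/
def IsPoly {S : Type*} [AddCommSemigroup S] {G : Type*} [Group G] (f : S → G) : Prop :=
  ∃ d : ℕ, DegLE d f

end PaperPoly

open Finset Polynomial fwdDiff
open scoped Nat

section Newton

variable {G : Type*} [AddCommGroup G]

lemma AddMonoidHom.comp_fwdDiff_iter {M G' : Type*} [AddCommMonoid M] [AddCommGroup G']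
    (ψ : G →+ G') (h : M) (f : M → G) (n : ℕ) :
    Δ_[h] ^[n] (ψ ∘ f) = ψ ∘ Δ_[h] ^[n] f := by
  funext y
  simp [fwdDiff_iter_eq_sum_shift, map_sum, map_zsmul]

lemma fwdDiff_iter_eq_zero_of_le {f : ℕ → G} {d k : ℕ} (hf : Δ_[1] ^[d] f = 0) (hk : d ≤ k) :
    Δ_[1] ^[k] f = 0 := by
  obtain ⟨m, rfl⟩ := Nat.exists_eq_add_of_le hk
  rw [add_comm, Function.iterate_add_apply, hf]
  exact Function.iterate_fixed (fwdDiff_const 1 (0 : G)) m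

lemma eq_sum_choose_smul_fwdDiff_iter {f : ℕ → G} {d : ℕ} (hf : Δ_[1] ^[d + 1] f = 0) (n : ℕ) :
    f n = ∑ k ∈ range (d + 1), n.choose k • Δ_[1] ^[k] f 0 := by
  have hvanish : ∀ k, (d + 1 ≤ k ∨ n < k) → n.choose k • Δ_[1] ^[k] f 0 = 0 := by
    rintro k (hk | hk)
    · rw [fwdDiff_iter_eq_zero_of_le hf hk, Pi.zero_apply, smul_zero]
    · rw [Nat.choose_eq_zero_of_lt hk, zero_smul]
  have hsum : ∀ m, m = n + 1 ∨ m = d + 1 → ∑ k ∈ range m, n.choose k • Δ_[1] ^[k] f 0 =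
      ∑ k ∈ range (n + d + 1), n.choose k • Δ_[1] ^[k] f 0 := by
    intro m hm
    refine sum_subset (range_subset_range.2 (by omega)) fun k hk hkm => hvanish k ?_
    simp only [mem_range] at hk hkm
    omega
  simpa [hsum (n + 1) (.inl rfl), hsum (d + 1) (.inr rfl)] using
    shift_eq_sum_fwdDiff_iter 1 f n 0

end Newton

section Vanishing

variable {d : ℕ}

lemma eq_zero_of_fwdDiff_iter_eq_zero_of_infinite_zeros {K : Type*} [Field K] [CharZero K]
    {p : ℕ → K} (hp : Δ_[1] ^[d + 1] p = 0) (hzeros : {n | p n = 0}.Infinite) : p = 0 := by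
  set P : K[X] := ∑ k ∈ range (d + 1), C (Δ_[1] ^[k] p 0 / k !) * descPochhammer K k
  have hP : ∀ n : ℕ, P.eval (n : K) = p n := by
    intro n
    rw [eq_sum_choose_smul_fwdDiff_iter hp n, eval_finsetSum]
    refine sum_congr rfl fun k _ => ?_
    rw [eval_mul, eval_C, descPochhammer_eval_eq_descFactorial,
      Nat.descFactorial_eq_factorial_mul_choose, nsmul_eq_mul]
    have : (k ! : K) ≠ 0 := Nat.cast_ne_zero.2 k.factorial_ne_zero
    push_cast
    field_simp
  have hP0 : P = 0 := eq_zero_of_infinite_isRoot P <|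
    (hzeros.image Nat.cast_injective.injOn).mono <| by
      rintro _ ⟨n, hn, rfl⟩
      exact (hP n).trans hn
  funext n
  rw [← hP n, hP0, eval_zero, Pi.zero_apply]

lemma eq_zero_of_fwdDiff_iter_eq_zero_of_infinite_zeros_of_projective {M : Type*}
    [AddCommGroup M] [Module.Projective ℤ M]
    {f : ℕ → M} (hf : Δ_[1] ^[d + 1] f = 0) (hzeros : {n | f n = 0}.Infinite) : f = 0 := by
  funext n
  refine (Module.forall_dual_apply_eq_zero_iff ℤ (f n)).1 fun χ => ?_
  let ψ : M →+ ℚ := (Int.castAddHom ℚ).comp χ.toAddMonoidHom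
  have hψ : ψ ∘ f = 0 := by
    refine eq_zero_of_fwdDiff_iter_eq_zero_of_infinite_zeros (d := d) ?_ ?_
    · rw [ψ.comp_fwdDiff_iter, hf]
      exact funext fun _ => map_zero ψ
    · exact hzeros.mono fun m hm => by simp [ψ, show f m = 0 from hm]
  simpa [ψ] using congrFun hψ n

lemma eq_zero_of_fwdDiff_iter_eq_zero_of_infinite_zeros_of_torsionFree {M : Type*}
    [AddCommGroup M] [IsAddTorsionFree M]
    {f : ℕ → M} (hf : Δ_[1] ^[d + 1] f = 0) (hzeros : {n | f n = 0}.Infinite) : f = 0 := by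
  let N : Submodule ℤ M := .span ℤ (Set.range fun k : Fin (d + 1) => Δ_[1] ^[k] f 0)
  have hfN : ∀ n, f n ∈ N := fun n => by
    rw [eq_sum_choose_smul_fwdDiff_iter hf n]
    exact sum_mem fun k hk => N.smul_of_tower_mem _ <|
      Submodule.subset_span ⟨⟨k, mem_range.1 hk⟩, rfl⟩
  have : Module.Finite ℤ N := Module.Finite.span_of_finite ℤ (Set.finite_range _)
  let f' : ℕ → N := fun n => ⟨f n, hfN n⟩
  have hf' : Δ_[1] ^[d + 1] f' = 0 := by
    funext n
    have h := congrFun (N.subtype.toAddMonoidHom.comp_fwdDiff_iter 1 f' (d + 1)) n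
    rw [show ⇑N.subtype.toAddMonoidHom ∘ f' = f from rfl, hf] at h
    exact Subtype.ext h.symm
  have hf'0 : f' = 0 := eq_zero_of_fwdDiff_iter_eq_zero_of_infinite_zeros_of_projective hf'
    (hzeros.mono fun m hm => Subtype.ext hm)
  funext n
  exact congrArg Subtype.val (congrFun hf'0 n)

end Vanishing

section Nilpotent

open scoped commutatorElement

variable {G : Type*} [Group G]

lemma commutatorElement_pow_left_of_commute {a b : G} (h : Commute ⁅a, b⁆ a) (n : ℕ) :
    ⁅a ^ n, b⁆ = ⁅a, b⁆ ^ n := by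
  induction n with
  | zero => simp
  | succ n ih =>
    calc ⁅a ^ (n + 1), b⁆ = a * ⁅a ^ n, b⁆ * a⁻¹ * ⁅a, b⁆ := by
          simp only [commutatorElement_def]; group
      _ = ⁅a, b⁆ ^ (n + 1) := by
          rw [ih, ← (h.pow_left n).eq, mul_inv_cancel_right, pow_succ]

lemma mem_upperCentralSeries_of_pow_mem (htf : ∀ g : G, g ≠ 1 → ¬IsOfFinOrder g) {k n : ℕ}
    {x : G} (hn : n ≠ 0) (hx : x ∈ Subgroup.upperCentralSeries G (k + 1))
    (hxn : x ^ n ∈ Subgroup.upperCentralSeries G k) : x ∈ Subgroup.upperCentralSeries G k := by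
  induction k generalizing x with
  | zero =>
    rw [Subgroup.upperCentralSeries_zero, Subgroup.mem_bot] at hxn ⊢
    by_contra hx1
    exact htf x hx1 (isOfFinOrder_iff_pow_eq_one.2 ⟨n, Nat.pos_of_ne_zero hn, hxn⟩)
  | succ k ih =>
    rw [Subgroup.mem_upperCentralSeries_succ_iff] at hx hxn ⊢
    intro y
    refine ih (hx y) ?_
    let π := QuotientGroup.mk' (Subgroup.upperCentralSeries G k)
    have hcomm : Commute ⁅π x, π y⁆ (π x) := by
      rw [← commutatorElement_eq_one_iff_commute, ← map_commutatorElement, ← map_commutatorElement,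
        QuotientGroup.mk'_apply, QuotientGroup.eq_one_iff]
      exact Subgroup.mem_upperCentralSeries_succ_iff.1 (hx y) x
    rw [← QuotientGroup.eq_one_iff, ← QuotientGroup.mk'_apply, map_pow, map_commutatorElement,
      ← commutatorElement_pow_left_of_commute hcomm, ← map_pow, ← map_commutatorElement,
      QuotientGroup.mk'_apply, QuotientGroup.eq_one_iff]
    exact hxn y

lemma mem_center_of_pow_mem_center [Group.IsNilpotent G] (htf : ∀ g : G, g ≠ 1 → ¬IsOfFinOrder g)
    {n : ℕ} {x : G} (hn : n ≠ 0) (hxn : x ^ n ∈ Subgroup.center G) : x ∈ Subgroup.center G := by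
  have hxn' : ∀ k, x ^ n ∈ Subgroup.upperCentralSeries G (k + 1) := fun k =>
    Subgroup.upperCentralSeries_mono G (by omega) (Subgroup.upperCentralSeries_one G ▸ hxn)
  have hdescend : ∀ k, x ∈ Subgroup.upperCentralSeries G (k + 1) → x ∈ Subgroup.center G := by
    intro k
    induction k with
    | zero => simp
    | succ k ih => exact fun hx => ih (mem_upperCentralSeries_of_pow_mem htf hn hx (hxn' k))
  obtain ⟨N, hN⟩ := Group.IsNilpotent.nilpotent G
  exact hdescend N (Subgroup.upperCentralSeries_mono G N.le_succ (hN ▸ Subgroup.mem_top x))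

lemma QuotientGroup.not_isOfFinOrder_center [Group.IsNilpotent G]
    (htf : ∀ g : G, g ≠ 1 → ¬IsOfFinOrder g) :
    ∀ q : G ⧸ Subgroup.center G, q ≠ 1 → ¬IsOfFinOrder q := by
  intro q hq hfin
  obtain ⟨n, hn, hqn⟩ := isOfFinOrder_iff_pow_eq_one.1 hfin
  obtain ⟨x, rfl⟩ := QuotientGroup.mk_surjective q
  rw [← QuotientGroup.mk_pow, QuotientGroup.eq_one_iff] at hqn
  exact hq ((QuotientGroup.eq_one_iff x).2 (mem_center_of_pow_mem_center htf hn.ne' hqn))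

end Nilpotent

namespace PaperPoly

namespace DegLE

section Group

variable {S G H : Type*} [AddCommSemigroup S] [Group G] [Group H] {d : ℕ} {f : S → G}

lemma map (ψ : G →* H) (hf : DegLE d f) : DegLE d (ψ ∘ f) := by
  induction d generalizing f with
  | zero => exact fun t t' => congrArg ψ (hf t t')
  | succ d ih =>
    refine fun s => ⟨?_, ?_⟩
    · convert ih (hf s).1 using 1; funext t; simp
    · convert ih (hf s).2 using 1; funext t; simp

lemma of_map {ψ : G →* H} (hψ : Function.Injective ψ) (hf : DegLE d (ψ ∘ f)) : DegLE d f := by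
  induction d generalizing f with
  | zero => exact fun t t' => hψ (hf t t')
  | succ d ih =>
    refine fun s => ⟨ih ?_, ih ?_⟩
    · convert (hf s).1 using 1; funext t; simp
    · convert (hf s).2 using 1; funext t; simp

lemma mul_const (hf : DegLE d f) (c : G) : DegLE d fun t => f t * c := by
  cases d with
  | zero => exact fun t t' => congrArg (· * c) (hf t t')
  | succ d =>
    refine fun s => ⟨?_, ?_⟩
    · convert (hf s).1 using 1; funext t; group
    · convert (hf s).2.map (MulAut.conj c⁻¹).toMonoidHom using 1
      funext t
      simp only [Function.comp_apply, MulEquiv.coe_toMonoidHom, MulAut.conj_apply]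
      group

end Group

variable {A : Type*} [CommGroup A] {d : ℕ} {f : ℕ → A}

lemma fwdDiff_iter_ofMul_eq_zero (hf : DegLE d f) :
    Δ_[1] ^[d + 1] (Additive.ofMul ∘ f) = 0 := by
  induction d generalizing f with
  | zero => funext n; simp [fwdDiff, hf (n + 1) n]
  | succ d ih =>
    rw [Function.iterate_succ_apply]
    convert ih (hf 1).1 using 2
    funext n
    simp [fwdDiff, add_comm, sub_eq_add_neg]

lemma eq_one_of_infinite [IsMulTorsionFree A] (hf : DegLE d f)
    (hones : {n | f n = 1}.Infinite) : f = 1 := by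
  have := eq_zero_of_fwdDiff_iter_eq_zero_of_infinite_zeros_of_torsionFree
    hf.fwdDiff_iter_ofMul_eq_zero hones
  funext n
  simpa using congrFun this n

end DegLE

theorem IsPoly.eq_one_of_infinite {G : Type*} [Group G] [Group.IsNilpotent G]
    (htf : ∀ g : G, g ≠ 1 → ¬IsOfFinOrder g) {g : ℕ → G} (hg : IsPoly g)
    (hones : {n | g n = 1}.Infinite) : g = 1 := by
  revert htf g
  refine Group.nilpotent_center_quotient_ind
    (P := fun G _ _ => (∀ g : G, g ≠ 1 → ¬IsOfFinOrder g) →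
      ∀ {g : ℕ → G}, IsPoly g → {n | g n = 1}.Infinite → g = 1) G ?_ ?_
  · intro G _ _ _ g _ _
    exact Subsingleton.elim _ _
  · intro G _ _ ih htf g ⟨d, hd⟩ hones
    let π := QuotientGroup.mk' (Subgroup.center G)
    have hπg : π ∘ g = 1 := ih (QuotientGroup.not_isOfFinOrder_center htf) ⟨d, hd.map π⟩
      (hones.mono fun n hn => by simp [π, show g n = 1 from hn])
    have hcenter : ∀ n, g n ∈ Subgroup.center G := fun n =>
      (QuotientGroup.eq_one_iff (g n)).1 (congrFun hπg n)
    let f : ℕ → Subgroup.center G := fun n => ⟨g n, hcenter n⟩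
    have hf : DegLE d f := DegLE.of_map (Subgroup.subtype_injective _) hd
    open scoped IsMulCommutative in
    have hf1 : f = 1 :=
      have : IsMulTorsionFree (Subgroup.center G) :=
        isMulTorsionFree_iff_not_isOfFinOrder.2 fun z hz hfin =>
          htf z (by simpa using hz) ((Subgroup.center G).subtype.isOfFinOrder hfin)
      hf.eq_one_of_infinite (hones.mono fun n hn => Subtype.ext hn)
    funext n
    exact congrArg Subtype.val (congrFun hf1 n)

theorem polynomial_sequence_repeats_iff_constant {G : Type*} [Group G]
    [Group.IsNilpotent G] (htf : ∀ g : G, g ≠ 1 → ¬IsOfFinOrder g)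
    (g : ℕ → G) (hg : IsPoly g) :
    (∃ c : G, {n : ℕ | g n = c}.Infinite) ↔ (∃ c : G, ∀ n : ℕ, g n = c) := by
  constructor
  · rintro ⟨c, hinf⟩
    obtain ⟨d, hd⟩ := hg
    have hones : {n | g n * c⁻¹ = 1}.Infinite :=
      hinf.mono fun n hn => by simp [show g n = c from hn]
    have h := IsPoly.eq_one_of_infinite htf ⟨d, hd.mul_const c⁻¹⟩ hones
    exact ⟨c, fun n => mul_inv_eq_one.1 (congrFun h n)⟩
  · rintro ⟨c, hc⟩
    exact ⟨c, by simpa [hc] using Set.infinite_univ⟩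

end PaperPoly
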